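/- arXiv:0808.3105 — 2 statements merged into one kernel-verified Lean document; each statement's English description precedes it below -/
import Mathlib

section
/- Fix x ∈ (0,1]^n and let E = {y ∈ I^n : y_i = x_i for some i}. For every y ∈ I^n \ E there exists a unique reflection ξ of I^n such that ξ(y) < ξ(x) coordinatewise. Moreover, for distinct reflections ξ ≠ η, the intersection ξ([0,ξ(x)]) ∩ η([0,η(x)]) is contained in E. -/
open MeasureTheory

/-- The unit cube `I^n ⊆ ℝ^n`. -/
def cube (n : ℕ) : Set (Fin n → ℝ) := Set.univ.pi fun _ => Set.Icc (0:ℝ) 1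

/-- The box `[0,x] = [0,x_1] × ⋯ × [0,x_n]`. -/
def box {n : ℕ} (x : Fin n → ℝ) : Set (Fin n → ℝ) := Set.univ.pi fun i => Set.Icc 0 (x i)

/-- The reflection of `I^n` replacing the `i`-th coordinate by `1 - x i` for `i ∈ S`. -/
def reflMap {n : ℕ} (S : Finset (Fin n)) (x : Fin n → ℝ) : Fin n → ℝ :=
  fun i => if i ∈ S then 1 - x i else x i

/-- `x_S`: the point obtained from `x` by setting the coordinates in `S` equal to `1`. -/
def setTo1 {n : ℕ} (S : Finset (Fin n)) (x : Fin n → ℝ) : Fin n → ℝ :=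
  fun i => if i ∈ S then 1 else x i

/-! The condition `ξ(y) < ξ(x)` is decided coordinate by coordinate: off `E` it holds exactly when
`ξ` flips the coordinates where `y` exceeds `x`. Two distinct reflections disagree at some
coordinate `i`, and there one reflected box forces `z i ≤ x i` while the other forces
`x i ≤ z i`. -/

section

variable {n : ℕ}

theorem reflMap_apply_lt_reflMap_apply_iff (S : Finset (Fin n)) (y x : Fin n → ℝ) (i : Fin n) :
    reflMap S y i < reflMap S x i ↔ if i ∈ S then x i < y i else y i < x i := by
  unfold reflMap
  split_ifs <;> simp

theorem forall_reflMap_lt_reflMap_iff {y x : Fin n → ℝ} (hy : ∀ i, y i ≠ x i)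
    (S : Finset (Fin n)) :
    (∀ i, reflMap S y i < reflMap S x i) ↔ S = Finset.univ.filter fun i => x i < y i := by
  simp only [reflMap_apply_lt_reflMap_apply_iff]
  constructor
  · intro h
    ext i
    have hi := h i
    by_cases hiS : i ∈ S <;> simp only [hiS, if_true, if_false] at hi <;> simp [hiS, hi, hi.le]
  · rintro rfl i
    by_cases hxy : x i < y i
    · simp [hxy]
    · simpa [hxy] using lt_of_le_of_ne (not_lt.1 hxy) (hy i)

theorem le_of_mem_image_reflMap_box {S : Finset (Fin n)} {x z : Fin n → ℝ}
    (hz : z ∈ reflMap S '' box (reflMap S x)) (i : Fin n) :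
    if i ∈ S then x i ≤ z i else z i ≤ x i := by
  obtain ⟨w, hw, rfl⟩ := hz
  have hwi := (hw i (Set.mem_univ i)).2
  unfold reflMap at hwi ⊢
  split_ifs at hwi ⊢ <;> linarith

theorem image_reflMap_box_inter_subset {S T : Finset (Fin n)} (hST : S ≠ T) (x : Fin n → ℝ) :
    reflMap S '' box (reflMap S x) ∩ reflMap T '' box (reflMap T x) ⊆ {z | ∃ i, z i = x i} := by
  rintro z ⟨hzS, hzT⟩
  obtain ⟨i, hi⟩ : ∃ i, ¬(i ∈ S ↔ i ∈ T) := by simpa [Finset.ext_iff] using hST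
  have hS := le_of_mem_image_reflMap_box hzS i
  have hT := le_of_mem_image_reflMap_box hzT i
  refine ⟨i, ?_⟩
  by_cases hiS : i ∈ S <;> by_cases hiT : i ∈ T <;> simp_all <;> linarith

end

theorem stmt12_general {n : ℕ} (x : Fin n → ℝ) :
    (∀ y ∈ cube n, (∀ i, y i ≠ x i) →
      ∃! S : Finset (Fin n), ∀ i, reflMap S y i < reflMap S x i) ∧
    (∀ S T : Finset (Fin n), S ≠ T →
      (reflMap S '' box (reflMap S x)) ∩ (reflMap T '' box (reflMap T x)) ⊆
        {y | ∃ i, y i = x i}) :=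
  ⟨fun _ _ hy => ⟨_, (forall_reflMap_lt_reflMap_iff hy _).2 rfl,
      fun _ hS => (forall_reflMap_lt_reflMap_iff hy _).1 hS⟩,
    fun _ _ hST => image_reflMap_box_inter_subset hST x⟩

/-- Fix `x ∈ (0,1]^n` and let `E = {y : y_i = x_i for some i}`.  For every
`y ∈ I^n \ E` there is a unique reflection `ξ` with `ξ(y) < ξ(x)` coordinatewise;
moreover for distinct reflections `ξ ≠ η`, `ξ([0,ξ(x)]) ∩ η([0,η(x)]) ⊆ E`. -/
theorem stmt12 {n : ℕ} (x : Fin n → ℝ) (hx : ∀ i, x i ∈ Set.Ioc (0:ℝ) 1) :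
    (∀ y ∈ cube n, (∀ i, y i ≠ x i) →
      ∃! S : Finset (Fin n), ∀ i, reflMap S y i < reflMap S x i) ∧
    (∀ S T : Finset (Fin n), S ≠ T →
      (reflMap S '' box (reflMap S x)) ∩ (reflMap T '' box (reflMap T x)) ⊆
        {y | ∃ i, y i = x i}) :=
  stmt12_general x
end

section
/- Let κ be a multivariate measure of concordance. If C is an n-copula and S ⊆ {1,...,n} with cardinality s, then r_n κ_n(σ_S*(C)) = ∑_{j=n-s}^{n} (-1)^{n-s+j} r_n r_{n-1} ⋯ r_j ∑_{P ∈ S(n-j)} κ_j(C_P), where S(k) denotes the k-element subsets of S and C_P is the extended marginal of C setting coordinates in P to 1 (with κ_j evaluated on its proper j-copula). -/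
open MeasureTheory Filter

noncomputable section

/-- `C` is an `n`-copula: on `I^n` it is the box-distribution function of a probability
measure all of whose one-dimensional margins are uniform on `[0,1]`. -/
def IsCopula {n : ℕ} (C : (Fin n → ℝ) → ℝ) : Prop :=
  ∃ μ : Measure (Fin n → ℝ), IsProbabilityMeasure μ ∧
    (∀ x ∈ cube n, C x = (μ (box x)).toReal) ∧
    (∀ i : Fin n, μ.map (fun y => y i) = volume.restrict (Set.Icc (0:ℝ) 1))

/-- The action `τ*(C) = C ∘ τ` of a coordinate permutation (with index permutation `τ`). -/
def permTrans {n : ℕ} (τ : Equiv.Perm (Fin n)) (C : (Fin n → ℝ) → ℝ) : (Fin n → ℝ) → ℝ :=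
  fun x => C fun i => x (τ i)

/-- The action `σ_S*(C)(x) = μ_C(σ_S([0,x]))` of the reflection `σ_S`, written out by
inclusion–exclusion in terms of the values of `C`. -/
def reflTrans {n : ℕ} (S : Finset (Fin n)) (C : (Fin n → ℝ) → ℝ) : (Fin n → ℝ) → ℝ :=
  fun x => ∑ T ∈ S.powerset, (-1 : ℝ) ^ T.card *
    C (fun i => if i ∈ T then 1 - x i else if i ∈ S then 1 else x i)

/-- The comonotone copula `M(t_1,…,t_n) = min(t_1,…,t_n)`. -/
def Mcop (n : ℕ) : (Fin n → ℝ) → ℝ := fun x => iInf x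

/-- The independence copula `Π(t_1,…,t_n) = t_1 ⋯ t_n`. -/
def Pcop (n : ℕ) : (Fin n → ℝ) → ℝ := fun x => ∏ i, x i

/-- The proper `(n - card P)`-copula of the extended marginal `C_P` of `C`:
coordinates in `P` are set equal to `1` and the remaining coordinates are relabelled
in increasing order. -/
def properMarg {n : ℕ} (C : (Fin n → ℝ) → ℝ) (P : Finset (Fin n)) :
    (Fin (Pᶜ.card) → ℝ) → ℝ :=
  fun y => C fun i => if h : i ∈ Pᶜ then y ((Pᶜ.orderIsoOfFin rfl).symm ⟨i, h⟩) else 1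

/-- A multivariate measure of concordance `κ = ({κ_n},{r_n})` in the sense of Taylor:
normalization, monotonicity, continuity, permutation invariance, duality, the
reflection symmetry property and the transition property, extended by `κ_0 = κ_1 = 0`. -/
structure ConcordanceMeasure where
  κ : (n : ℕ) → ((Fin n → ℝ) → ℝ) → ℝ
  r : ℕ → ℝ
  kappa_zero : ∀ C, κ 0 C = 0
  kappa_one : ∀ C, κ 1 C = 0
  normM : ∀ n, 2 ≤ n → κ n (Mcop n) = 1
  normPi : ∀ n, 2 ≤ n → κ n (Pcop n) = 0
  mono : ∀ n, 2 ≤ n → ∀ A B : (Fin n → ℝ) → ℝ, IsCopula A → IsCopula B →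
    (∀ x ∈ cube n, A x ≤ B x) →
    (∀ x ∈ cube n, reflTrans Finset.univ A x ≤ reflTrans Finset.univ B x) →
    κ n A ≤ κ n B
  cont : ∀ n, 2 ≤ n → ∀ (C : (Fin n → ℝ) → ℝ) (Cm : ℕ → (Fin n → ℝ) → ℝ),
    IsCopula C → (∀ m, IsCopula (Cm m)) →
    TendstoUniformlyOn Cm C atTop (cube n) →
    Tendsto (fun m => κ n (Cm m)) atTop (nhds (κ n C))
  permInv : ∀ n, 2 ≤ n → ∀ C : (Fin n → ℝ) → ℝ, IsCopula C →
    ∀ τ : Equiv.Perm (Fin n), κ n (permTrans τ C) = κ n C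
  duality : ∀ n, 2 ≤ n → ∀ C : (Fin n → ℝ) → ℝ, IsCopula C →
    κ n (reflTrans Finset.univ C) = κ n C
  rsp : ∀ n, 2 ≤ n → ∀ C : (Fin n → ℝ) → ℝ, IsCopula C →
    ∑ S : Finset (Fin n), κ n (reflTrans S C) = 0
  transition : ∀ n, 2 ≤ n → ∀ (C : (Fin n → ℝ) → ℝ) (E : (Fin (n+1) → ℝ) → ℝ),
    IsCopula C → IsCopula E →
    (∀ x ∈ cube n, C x = E (fun i : Fin (n+1) =>
      if h : (i : ℕ) = 0 then 1 else x ⟨(i : ℕ) - 1, by have := i.isLt; omega⟩)) →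
    r n * κ n C = κ (n+1) E + κ (n+1) (reflTrans {0} E)

/-!
Induction on `card S`. For `i ∈ S` put `D = σ_{S∖i}*(C)`, so that `σ_S*(C) = σ_i*(D)`. The
transition property, moved from the first coordinate to `i` by permutation invariance, gives
`κ_n(σ_i*(D)) = r_{n-1} κ_{n-1}(D_{i}) - κ_n(D)`; for `n = 2`, where it is not available, the same
identity (with `κ_1 = 0`) follows from reflection symmetry and duality. Reflections in coordinates
other than `i` commute with taking the margin in `i`, so the induction hypothesis applies to both
terms, in dimensions `n - 1` and `n` (in dimension `≤ 1` both sides vanish). Written as a sum over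
the subsets `P ⊆ S`, the right-hand side splits according to whether `i ∈ P`, and the two
expansions recombine.
-/

section Reflections

variable {n : ℕ}

theorem reflTrans_empty (C : (Fin n → ℝ) → ℝ) : reflTrans ∅ C = C := by
  funext x
  simp [reflTrans]

theorem reflTrans_insert {S : Finset (Fin n)} {i : Fin n} (hi : i ∉ S)
    (C : (Fin n → ℝ) → ℝ) (x : Fin n → ℝ) :
    reflTrans (insert i S) C x =
      reflTrans S C (Function.update x i 1) - reflTrans S C (Function.update x i (1 - x i)) := by
  have hiT : ∀ T ∈ S.powerset, i ∉ T := fun T hT h => hi (Finset.mem_powerset.mp hT h)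
  simp only [reflTrans]
  rw [Finset.sum_powerset_insert hi, sub_eq_add_neg, ← Finset.sum_neg_distrib]
  congr 1 <;> refine Finset.sum_congr rfl fun T hT => ?_
  · congr 2
    funext j
    by_cases hj : j = i
    · subst hj; simp [hiT T hT]
    · simp [hj]
  · rw [Finset.card_insert_of_notMem (hiT T hT), pow_succ]
    have : (fun j => if j ∈ insert i T then 1 - x j else if j ∈ insert i S then 1 else x j) =
        fun j => if j ∈ T then 1 - Function.update x i (1 - x i) j
          else if j ∈ S then 1 else Function.update x i (1 - x i) j := by
      funext j
      by_cases hj : j = i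
      · subst hj; simp [hiT T hT, hi]
      · simp [hj]
    rw [this]
    ring

theorem reflTrans_singleton (C : (Fin n → ℝ) → ℝ) (i : Fin n) (x : Fin n → ℝ) :
    reflTrans {i} C x = C (Function.update x i 1) - C (Function.update x i (1 - x i)) := by
  rw [← insert_empty_eq, reflTrans_insert (Finset.notMem_empty i), reflTrans_empty]

theorem reflTrans_insert_eq {S : Finset (Fin n)} {i : Fin n} (hi : i ∉ S)
    (C : (Fin n → ℝ) → ℝ) : reflTrans (insert i S) C = reflTrans {i} (reflTrans S C) := by
  funext x
  rw [reflTrans_insert hi, reflTrans_singleton]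

end Reflections

section Copulas

variable {n m : ℕ}

theorem mem_cube {x : Fin n → ℝ} : x ∈ cube n ↔ ∀ i, x i ∈ Set.Icc (0:ℝ) 1 := Set.mem_univ_pi

theorem mem_box {x y : Fin n → ℝ} : y ∈ box x ↔ ∀ i, y i ∈ Set.Icc 0 (x i) := Set.mem_univ_pi

theorem update_mem_cube {x : Fin n → ℝ} (hx : x ∈ cube n) (i : Fin n) {c : ℝ}
    (hc : c ∈ Set.Icc (0:ℝ) 1) : Function.update x i c ∈ cube n := by
  rw [mem_cube] at hx ⊢
  intro j
  by_cases hj : j = i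
  · subst hj; simpa using hc
  · simpa [hj] using hx j

theorem measurableSet_box (x : Fin n → ℝ) : MeasurableSet (box x) :=
  MeasurableSet.univ_pi fun _ => measurableSet_Icc

section UniformMargin

variable {μ : Measure (Fin n → ℝ)} {i : Fin n}
  (h : μ.map (fun y => y i) = volume.restrict (Set.Icc (0:ℝ) 1))
include h

theorem measure_coord_mem {s : Set ℝ} (hs : MeasurableSet s) :
    μ {y | y i ∈ s} = volume (s ∩ Set.Icc 0 1) := by
  rw [← Measure.restrict_apply hs, ← h, Measure.map_apply (measurable_pi_apply i) hs]
  rfl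

theorem measure_coord_eq (c : ℝ) : μ {y | y i = c} = 0 := by
  have := measure_coord_mem h (measurableSet_singleton c)
  simp only [Set.mem_singleton_iff] at this
  rw [this]
  exact measure_mono_null Set.inter_subset_left (Real.volume_singleton)

theorem measure_coord_notMem_Icc : μ {y | y i ∉ Set.Icc (0:ℝ) 1} = 0 := by
  have := measure_coord_mem h (measurableSet_Icc (a := (0:ℝ)) (b := 1)).compl
  simpa [Set.compl_inter_self] using this

end UniformMargin

theorem IsCopula.eq_zero_of_coord_eq_zero {C : (Fin n → ℝ) → ℝ} (hC : IsCopula C)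
    {x : Fin n → ℝ} (hx : x ∈ cube n) {i : Fin n} (hxi : x i = 0) : C x = 0 := by
  obtain ⟨μ, -, hμC, hμ⟩ := hC
  suffices μ (box x) = 0 by rw [hμC x hx, this, ENNReal.toReal_zero]
  refine measure_mono_null (fun y hy => ?_) (measure_coord_eq (hμ i) 0)
  have := mem_box.mp hy i
  rw [hxi] at this
  exact le_antisymm this.2 this.1

theorem extend_mem_cube {e : Fin m → Fin n} (he : Function.Injective e) {x : Fin m → ℝ}
    (hx : x ∈ cube m) : Function.extend e x 1 ∈ cube n := by
  rw [mem_cube] at hx ⊢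
  intro j
  by_cases hj : ∃ k, e k = j
  · obtain ⟨k, rfl⟩ := hj
    rw [he.extend_apply]
    exact hx k
  · rw [Function.extend_apply' _ _ _ hj]
    exact ⟨zero_le_one, le_rfl⟩

/-- Up to the null set of points outside the cube, pulling `box x` back along the coordinate
projection `y ↦ y ∘ e` gives the box of `x` extended by `1`. -/
theorem IsCopula.comp_extend {C : (Fin n → ℝ) → ℝ} (hC : IsCopula C)
    {e : Fin m → Fin n} (he : Function.Injective e) :
    IsCopula (fun x => C (Function.extend e x 1)) := by
  obtain ⟨μ, hμp, hμC, hμ⟩ := hC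
  have hF : Measurable (fun (y : Fin n → ℝ) (k : Fin m) => y (e k)) :=
    measurable_pi_lambda _ fun k => measurable_pi_apply (e k)
  refine ⟨μ.map (fun y k => y (e k)), Measure.isProbabilityMeasure_map hF.aemeasurable,
    fun x hx => ?_, fun k => ?_⟩
  · dsimp only
    rw [hμC _ (extend_mem_cube he hx), Measure.map_apply hF (measurableSet_box x)]
    set N := ⋃ j, {y : Fin n → ℝ | y j ∉ Set.Icc (0:ℝ) 1}
    have hN : μ N = 0 := measure_iUnion_null fun j => measure_coord_notMem_Icc (hμ j)
    have hsub : box (Function.extend e x 1) ⊆ (fun y k => y (e k)) ⁻¹' box x := by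
      intro y hy
      rw [Set.mem_preimage, mem_box]
      intro k
      simpa [he.extend_apply] using mem_box.mp hy (e k)
    have hsub' : (fun y k => y (e k)) ⁻¹' box x \ N ⊆ box (Function.extend e x 1) := by
      rintro y ⟨hy, hyN⟩
      rw [Set.mem_preimage, mem_box] at hy
      rw [mem_box]
      intro j
      by_cases hj : ∃ k, e k = j
      · obtain ⟨k, rfl⟩ := hj
        rw [he.extend_apply]
        exact hy k
      · rw [Function.extend_apply' _ _ _ hj]
        by_contra hc
        exact hyN (Set.mem_iUnion.mpr ⟨j, hc⟩)
    congr 1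
    refine le_antisymm (measure_mono hsub) ?_
    calc μ _ = μ (_ \ N) := (measure_sdiff_null hN).symm
      _ ≤ _ := measure_mono hsub'
  · rw [Measure.map_map (measurable_pi_apply k) hF]
    exact hμ (e k)

theorem box_update (x : Fin n → ℝ) (i : Fin n) (c : ℝ) :
    box (Function.update x i c) =
      {y | ∀ j ≠ i, y j ∈ Set.Icc 0 (x j)} ∩ {y | y i ∈ Set.Icc 0 c} := by
  ext y
  simp only [mem_box, Set.mem_inter_iff, Set.mem_ofPred_eq]
  constructor
  · intro h
    exact ⟨fun j hj => by simpa [hj] using h j, by simpa using h i⟩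
  · rintro ⟨h1, h2⟩ j
    by_cases hj : j = i
    · subst hj; simpa using h2
    · simpa [hj] using h1 j hj

theorem preimage_box_update_one_sub (x : Fin n → ℝ) (i : Fin n) :
    (fun y => Function.update y i (1 - y i)) ⁻¹' box x =
      {y | ∀ j ≠ i, y j ∈ Set.Icc 0 (x j)} ∩ {y | y i ∈ Set.Icc (1 - x i) 1} := by
  ext y
  simp only [Set.mem_preimage, mem_box, Set.mem_inter_iff, Set.mem_ofPred_eq, Set.mem_Icc]
  constructor
  · intro h
    refine ⟨fun j hj => by simpa [hj] using h j, ?_⟩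
    have := h i
    simp only [Function.update_self] at this
    constructor <;> linarith [this.1, this.2]
  · rintro ⟨h1, h2⟩ j
    by_cases hj : j = i
    · subst hj
      simp only [Function.update_self]
      constructor <;> linarith [h2.1, h2.2]
    · simpa [hj] using h1 j hj

theorem volume_Icc_map_one_sub :
    (volume.restrict (Set.Icc (0:ℝ) 1)).map (fun x => 1 - x) =
      volume.restrict (Set.Icc (0:ℝ) 1) := by
  have hpre : (fun x : ℝ => 1 - x) ⁻¹' Set.Icc 0 1 = Set.Icc 0 1 := by
    ext x
    simp only [Set.mem_preimage, Set.mem_Icc]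
    constructor <;> (intro ⟨a, b⟩; constructor <;> linarith)
  have := (Measure.measurePreserving_sub_left volume (1:ℝ)).restrict_preimage
    (measurableSet_Icc (a := (0:ℝ)) (b := 1))
  rw [hpre] at this
  exact this.map_eq

/-- `σ_i*(C)` is the box-distribution function of the image of `μ_C` under `y ↦ σ_i(y)`. -/
theorem IsCopula.reflTrans_singleton {C : (Fin n → ℝ) → ℝ} (hC : IsCopula C) (i : Fin n) :
    IsCopula (reflTrans {i} C) := by
  obtain ⟨μ, hμp, hμC, hμ⟩ := hC
  set ρ : (Fin n → ℝ) → (Fin n → ℝ) := fun y => Function.update y i (1 - y i)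
  have hρ : Measurable ρ := by fun_prop
  refine ⟨μ.map ρ, Measure.isProbabilityMeasure_map hρ.aemeasurable, fun x hx => ?_,
    fun j => ?_⟩
  · have hxi := mem_cube.mp hx i
    have hxi' : 1 - x i ∈ Set.Icc (0:ℝ) 1 := ⟨by linarith [hxi.2], by linarith [hxi.1]⟩
    have hunion : box (Function.update x i (1 - x i)) ∪ ρ ⁻¹' box x =
        box (Function.update x i 1) := by
      rw [box_update, box_update, preimage_box_update_one_sub, ← Set.inter_union_distrib_left,
        ← Set.ofPred_or]
      simp_rw [← Set.mem_union, Set.Icc_union_Icc_eq_Icc hxi'.1 hxi'.2]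
    have hinter : μ (box (Function.update x i (1 - x i)) ∩ ρ ⁻¹' box x) = 0 := by
      refine measure_mono_null ?_ (measure_coord_eq (hμ i) (1 - x i))
      rw [box_update, preimage_box_update_one_sub]
      rintro y ⟨⟨-, h1⟩, ⟨-, h2⟩⟩
      exact le_antisymm h1.2 h2.1
    have hadd := measure_union_add_inter (μ := μ) (box (Function.update x i (1 - x i)))
      (hρ (measurableSet_box x))
    rw [hunion, hinter, add_zero] at hadd
    rw [_root_.reflTrans_singleton, hμC _ (update_mem_cube hx i ⟨zero_le_one, le_rfl⟩),
      hμC _ (update_mem_cube hx i hxi'), Measure.map_apply hρ (measurableSet_box x), hadd,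
      ENNReal.toReal_add (measure_ne_top μ _) (measure_ne_top μ _)]
    ring
  · rw [Measure.map_map (measurable_pi_apply j) hρ]
    by_cases hj : j = i
    · subst hj
      have hcomp : (fun y : Fin n → ℝ => y j) ∘ ρ = (fun t => 1 - t) ∘ (fun y => y j) := by
        funext y; simp [ρ]
      rw [hcomp, ← Measure.map_map (g := fun t : ℝ => 1 - t) (by fun_prop)
        (measurable_pi_apply j), hμ j, volume_Icc_map_one_sub]
    · have hcomp : (fun y : Fin n → ℝ => y j) ∘ ρ = fun y => y j := by
        funext y; simp [ρ, hj]
      rw [hcomp]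
      exact hμ j

theorem IsCopula.reflTrans {C : (Fin n → ℝ) → ℝ} (hC : IsCopula C) (S : Finset (Fin n)) :
    IsCopula (reflTrans S C) := by
  induction S using Finset.induction with
  | empty => rwa [reflTrans_empty]
  | insert i S hi ih => rw [reflTrans_insert_eq hi]; exact ih.reflTrans_singleton i

theorem permTrans_eq_extend (τ : Equiv.Perm (Fin n)) (C : (Fin n → ℝ) → ℝ) :
    permTrans τ C = fun x => C (Function.extend τ.symm x 1) := by
  funext x
  simp only [permTrans]
  congr 1
  funext j
  simp

theorem IsCopula.permTrans {C : (Fin n → ℝ) → ℝ} (hC : IsCopula C) (τ : Equiv.Perm (Fin n)) :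
    IsCopula (permTrans τ C) := by
  rw [permTrans_eq_extend]
  exact hC.comp_extend τ.symm.injective

theorem reflTrans_congr_cube {A B : (Fin n → ℝ) → ℝ} (h : ∀ x ∈ cube n, A x = B x)
    (S : Finset (Fin n)) : ∀ x ∈ cube n, reflTrans S A x = reflTrans S B x := by
  intro x hx
  refine Finset.sum_congr rfl fun T _ => congrArg _ (h _ ?_)
  rw [mem_cube] at hx ⊢
  intro j
  have := hx j
  split_ifs
  · exact ⟨by linarith [this.2], by linarith [this.1]⟩
  · exact ⟨zero_le_one, le_rfl⟩
  · exact this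

theorem reflTrans_singleton_reflTrans_singleton {C : (Fin n → ℝ) → ℝ} (hC : IsCopula C)
    (i : Fin n) : ∀ x ∈ cube n, reflTrans {i} (reflTrans {i} C) x = C x := by
  intro x hx
  have h0 : C (Function.update x i 0) = 0 :=
    hC.eq_zero_of_coord_eq_zero (update_mem_cube hx i ⟨le_rfl, zero_le_one⟩) (i := i) (by simp)
  simp only [reflTrans_singleton, Function.update_idem, Function.update_self, sub_self,
    sub_sub_cancel, Function.update_eq_self, h0]
  ring

end Copulas

theorem Function.extend_extend_one {α β γ δ : Type*} [One δ] {f : β → γ} {g : α → β}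
    (hf : Function.Injective f) (hg : Function.Injective g) (x : α → δ) :
    Function.extend f (Function.extend g x 1) 1 = Function.extend (f ∘ g) x 1 := by
  funext j
  by_cases hj : ∃ b, f b = j
  · obtain ⟨b, rfl⟩ := hj
    rw [hf.extend_apply]
    by_cases hb : ∃ a, g a = b
    · obtain ⟨a, rfl⟩ := hb
      rw [hg.extend_apply, show f (g a) = (f ∘ g) a from rfl, (hf.comp hg).extend_apply]
    · rw [Function.extend_apply' _ _ _ hb, Function.extend_apply']
      · rfl
      rintro ⟨a, ha⟩
      exact hb ⟨a, hf ha⟩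
  · rw [Function.extend_apply' _ _ _ hj, Function.extend_apply']
    rintro ⟨a, rfl⟩
    exact hj ⟨g a, rfl⟩

theorem Function.extend_comp_perm {α β δ : Type*} [One δ] {e : α → β}
    (he : Function.Injective e) (π : Equiv.Perm α) (x : α → δ) :
    Function.extend (e ∘ π) x 1 = Function.extend e (x ∘ π.symm) 1 := by
  funext j
  by_cases hj : ∃ k, e k = j
  · obtain ⟨k, rfl⟩ := hj
    have : e k = (e ∘ π) (π.symm k) := by simp
    rw [he.extend_apply, this, (he.comp π.injective).extend_apply]
    rfl
  · rw [Function.extend_apply' _ _ _ hj, Function.extend_apply']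
    rintro ⟨k, rfl⟩
    exact hj ⟨π k, rfl⟩

section Marginals

variable {n : ℕ}

abbrev complEmb (P : Finset (Fin n)) : Fin Pᶜ.card ↪o Fin n := Pᶜ.orderEmbOfFin rfl

theorem properMarg_eq_extend (C : (Fin n → ℝ) → ℝ) (P : Finset (Fin n)) :
    properMarg C P = fun y => C (Function.extend (complEmb P) y 1) := by
  funext y
  simp only [properMarg]
  congr 1
  funext j
  by_cases h : j ∈ Pᶜ
  · rw [dif_pos h]
    have hj : complEmb P ((Pᶜ.orderIsoOfFin rfl).symm ⟨j, h⟩) = j := by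
      rw [← Finset.coe_orderIsoOfFin_apply, OrderIso.apply_symm_apply]
    conv_rhs => rw [← hj]
    rw [(complEmb P).injective.extend_apply]
  · rw [dif_neg h, Function.extend_apply']
    · rfl
    · rintro ⟨k, rfl⟩
      exact h (Finset.orderEmbOfFin_mem _ _ k)

theorem IsCopula.properMarg {C : (Fin n → ℝ) → ℝ} (hC : IsCopula C) (P : Finset (Fin n)) :
    IsCopula (properMarg C P) := by
  rw [properMarg_eq_extend]
  exact hC.comp_extend (complEmb P).injective

theorem properMarg_properMarg (C : (Fin n → ℝ) → ℝ) (P : Finset (Fin n))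
    (Q : Finset (Fin Pᶜ.card)) :
    properMarg (properMarg C P) Q = fun x => C (Function.extend (complEmb P ∘ complEmb Q) x 1) := by
  simp only [properMarg_eq_extend,
    Function.extend_extend_one (complEmb P).injective (complEmb Q).injective]

theorem range_complEmb_comp (P : Finset (Fin n)) (Q : Finset (Fin Pᶜ.card)) :
    Set.range (complEmb P ∘ complEmb Q) = ↑(P ∪ Q.image (complEmb P))ᶜ := by
  ext j
  simp only [Set.mem_range, Function.comp_apply, Finset.coe_compl, Finset.coe_union,
    Finset.coe_image, Set.mem_compl_iff, Set.mem_union, Set.mem_image, Finset.mem_coe, not_or,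
    not_exists, not_and]
  constructor
  · rintro ⟨k, rfl⟩
    refine ⟨fun h => ?_, fun q hq hqk => ?_⟩
    · exact Finset.mem_compl.mp (Finset.orderEmbOfFin_mem _ _ _) h
    · rw [(complEmb P).injective.eq_iff] at hqk
      exact Finset.mem_compl.mp (hqk ▸ Finset.orderEmbOfFin_mem _ _ k) hq
  · rintro ⟨hjP, hjQ⟩
    have hj : j ∈ Set.range (complEmb P) := by
      rw [Finset.range_orderEmbOfFin]; exact Finset.mem_compl.mpr hjP
    obtain ⟨a, rfl⟩ := hj
    have ha : a ∈ Set.range (complEmb Q) := by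
      rw [Finset.range_orderEmbOfFin]; exact Finset.mem_compl.mpr fun h => hjQ a h rfl
    obtain ⟨k, rfl⟩ := ha
    exact ⟨k, rfl⟩

theorem properMarg_reflTrans_image (C : (Fin n → ℝ) → ℝ) (P : Finset (Fin n))
    (Q : Finset (Fin Pᶜ.card)) :
    properMarg (reflTrans (Q.image (complEmb P)) C) P = reflTrans Q (properMarg C P) := by
  have he := (complEmb P).injective
  funext y
  simp only [properMarg_eq_extend, reflTrans]
  rw [Finset.powerset_image, Finset.sum_image fun _ _ _ _ h => Finset.image_injective he h]
  refine Finset.sum_congr rfl fun T _ => ?_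
  rw [Finset.card_image_of_injective _ he]
  congr 2
  funext j
  by_cases hj : ∃ k, complEmb P k = j
  · obtain ⟨k, rfl⟩ := hj
    simp only [he.mem_finset_image, he.extend_apply]
  · have hjim : ∀ U : Finset (Fin Pᶜ.card), j ∉ U.image (complEmb P) := fun U h => by
      obtain ⟨k, -, hk⟩ := Finset.mem_image.mp h
      exact hj ⟨k, hk⟩
    rw [Function.extend_apply' _ _ _ hj, if_neg (hjim T), if_neg (hjim Q),
      Function.extend_apply' _ _ _ hj]

end Marginals

section ReflExpansion

variable {α β : Type*} (r : ℕ → ℝ) (n : ℕ)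

/-- The right-hand side of the reflection formula, regrouped by the subsets `P ⊆ S` instead of
by `j = n - card P`. -/
def reflExpansion (S : Finset α) (g : Finset α → ℝ) : ℝ :=
  ∑ P ∈ S.powerset, (-1) ^ (S.card + P.card) * (∏ k ∈ Finset.Icc (n - P.card) n, r k) * g P

theorem reflExpansion_empty (g : Finset α → ℝ) : reflExpansion r n ∅ g = r n * g ∅ := by
  simp [reflExpansion]

theorem reflExpansion_insert [DecidableEq α] {S : Finset α} {i : α} (hi : i ∉ S)
    (g : Finset α → ℝ) :
    reflExpansion r (n + 1) (insert i S) g =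
      r (n + 1) * reflExpansion r n S (fun P => g (insert i P)) - reflExpansion r (n + 1) S g := by
  have hiP : ∀ P ∈ S.powerset, i ∉ P := fun P hP h => hi (Finset.mem_powerset.mp hP h)
  simp only [reflExpansion]
  rw [Finset.sum_powerset_insert hi, Finset.mul_sum, sub_eq_add_neg, ← Finset.sum_neg_distrib,
    add_comm]
  congr 1 <;> refine Finset.sum_congr rfl fun P hP => ?_
  · rw [Finset.card_insert_of_notMem hi, Finset.card_insert_of_notMem (hiP P hP),
      show n + 1 - (P.card + 1) = n - P.card by omega,
      Finset.prod_Icc_succ_top (by omega)]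
    ring
  · rw [Finset.card_insert_of_notMem hi, add_right_comm, pow_succ]
    ring

theorem reflExpansion_image [DecidableEq β] {e : α → β} (he : Function.Injective e) (S : Finset α)
    (g : Finset β → ℝ) :
    reflExpansion r n (S.image e) g = reflExpansion r n S (fun P => g (P.image e)) := by
  simp only [reflExpansion]
  rw [Finset.powerset_image, Finset.sum_image fun _ _ _ _ h => Finset.image_injective he h]
  simp only [Finset.card_image_of_injective _ he]

theorem reflExpansion_eq_sum_Icc {S : Finset α} (hS : S.card ≤ n) (g : Finset α → ℝ) :
    reflExpansion r n S g =
      ∑ j ∈ Finset.Icc (n - S.card) n, (-1 : ℝ) ^ (n - S.card + j) *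
        (∏ k ∈ Finset.Icc j n, r k) * ∑ P ∈ S.powersetCard (n - j), g P := by
  have hcard : ∀ k, ∑ P ∈ S.powersetCard k,
      (-1 : ℝ) ^ (S.card + P.card) * (∏ l ∈ Finset.Icc (n - P.card) n, r l) * g P =
      (-1 : ℝ) ^ (S.card + k) * (∏ l ∈ Finset.Icc (n - k) n, r l) *
        ∑ P ∈ S.powersetCard k, g P := by
    intro k
    rw [Finset.mul_sum]
    refine Finset.sum_congr rfl fun P hP => ?_
    rw [(Finset.mem_powersetCard.mp hP).2]
  rw [reflExpansion, Finset.sum_powerset]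
  simp only [hcard]
  refine Finset.sum_nbij' (fun k => n - k) (fun j => n - j) ?_ ?_ ?_ ?_ fun k hk => ?_
  · intro k hk
    simp only [Finset.mem_range, Finset.mem_Icc] at hk ⊢
    omega
  · intro j hj
    simp only [Finset.mem_range, Finset.mem_Icc] at hj ⊢
    omega
  · intro k hk
    simp only [Finset.mem_range] at hk
    omega
  · intro j hj
    simp only [Finset.mem_Icc] at hj
    omega
  simp only [Finset.mem_range] at hk
  rw [Nat.sub_sub_self (by omega), neg_one_pow_eq_pow_mod_two (R := ℝ),
    neg_one_pow_eq_pow_mod_two (R := ℝ) (n := n - S.card + (n - k)),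
    show (S.card + k) % 2 = (n - S.card + (n - k)) % 2 by omega]

end ReflExpansion

namespace ConcordanceMeasure

variable (κ : ConcordanceMeasure) {n m : ℕ}

theorem kappa_of_le_one {k : ℕ} (hk : k ≤ 1) (C : (Fin k → ℝ) → ℝ) : κ.κ k C = 0 := by
  interval_cases k
  · exact κ.kappa_zero C
  · exact κ.kappa_one C

theorem kappa_congr_cube {A B : (Fin n → ℝ) → ℝ} (hA : IsCopula A) (hB : IsCopula B)
    (h : ∀ x ∈ cube n, A x = B x) : κ.κ n A = κ.κ n B := by
  rcases le_or_gt n 1 with hn | hn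
  · rw [κ.kappa_of_le_one hn, κ.kappa_of_le_one hn]
  have hlim := κ.cont n hn B (fun _ => A) hB (fun _ => hA) <| by
    rw [Metric.tendstoUniformlyOn_iff]
    intro ε hε
    filter_upwards with _ x hx
    simpa [h x hx] using hε
  exact tendsto_nhds_unique tendsto_const_nhds hlim

theorem kappa_comp_extend_eq {C : (Fin n → ℝ) → ℝ} (hC : IsCopula C)
    {e e' : Fin m → Fin n} (he : Function.Injective e) (he' : Function.Injective e')
    (hrange : Set.range e = Set.range e') :
    κ.κ m (fun x => C (Function.extend e x 1)) = κ.κ m (fun x => C (Function.extend e' x 1)) := by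
  rcases le_or_gt m 1 with hm | hm
  · rw [κ.kappa_of_le_one hm, κ.kappa_of_le_one hm]
  let π : Equiv.Perm (Fin m) :=
    ((Equiv.ofInjective e he).trans (Equiv.setCongr hrange)).trans (Equiv.ofInjective e' he').symm
  have hπ : e' ∘ π = e := by
    funext k
    simp [π, Equiv.apply_ofInjective_symm]
  have hperm : (fun x => C (Function.extend e x 1)) =
      permTrans π.symm (fun x => C (Function.extend e' x 1)) := by
    funext x
    rw [← hπ, Function.extend_comp_perm he']
    rfl
  rw [hperm, κ.permInv m hm _ (hC.comp_extend he')]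

theorem kappa_comp_extend {C : (Fin n → ℝ) → ℝ} (hC : IsCopula C) {e : Fin m → Fin n}
    (he : Function.Injective e) {P : Finset (Fin n)} (hrange : Set.range e = ↑Pᶜ) :
    κ.κ m (fun x => C (Function.extend e x 1)) = κ.κ (Pᶜ.card) (properMarg C P) := by
  obtain rfl : m = Pᶜ.card := by
    have himage : Finset.univ.image e = Pᶜ := by
      rw [← Finset.coe_inj, Finset.coe_image, Finset.coe_univ, Set.image_univ, hrange]
    rw [← himage, Finset.card_image_of_injective _ he, Finset.card_univ, Fintype.card_fin]
  rw [properMarg_eq_extend]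
  exact κ.kappa_comp_extend_eq hC he (complEmb P).injective
    (by rw [hrange, Finset.range_orderEmbOfFin])

theorem transition_vector_eq_cons (x : Fin m → ℝ) :
    (fun i : Fin (m + 1) =>
      if h : (i : ℕ) = 0 then 1 else x ⟨(i : ℕ) - 1, by have := i.isLt; omega⟩) =
      Fin.cons 1 x := by
  funext i
  refine Fin.cases ?_ (fun k => ?_) i <;> simp

/-- Conjugate the transition property at `0` by the transposition of `0` and `i`. -/
theorem transition_at (hm : 2 ≤ m) {E : (Fin (m + 1) → ℝ) → ℝ} (hE : IsCopula E)
    (i : Fin (m + 1)) :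
    κ.r m * κ.κ (({i}ᶜ : Finset (Fin (m + 1))).card) (properMarg E {i}) =
      κ.κ (m + 1) E + κ.κ (m + 1) (reflTrans {i} E) := by
  set τ := Equiv.swap 0 i with hτ
  have hττ : ∀ j, τ (τ j) = j := Equiv.swap_apply_self 0 i
  have hτi : τ i = 0 := Equiv.swap_apply_right 0 i
  let e : Fin m → Fin (m + 1) := τ ∘ Fin.succ
  have he : Function.Injective e := τ.injective.comp (Fin.succ_injective _)
  have hrange : Set.range e = ↑({i}ᶜ : Finset (Fin (m + 1))) := by
    ext j
    simp only [Set.mem_range, Finset.coe_compl, Finset.coe_singleton, Set.mem_compl_iff,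
      Set.mem_singleton_iff, e, Function.comp_apply]
    constructor
    · rintro ⟨k, rfl⟩ hk
      exact Fin.succ_ne_zero k (by rw [← hττ k.succ, hk, hτi])
    · intro hj
      obtain ⟨k, hk⟩ := (Fin.exists_succ_eq (x := τ j)).mpr fun h =>
        hj (by rw [← hττ j, h, ← hτi, hττ])
      exact ⟨k, by rw [hk, hττ]⟩
  have hmarg : (fun x : Fin m → ℝ => permTrans τ E (fun j : Fin (m + 1) =>
      if h : (j : ℕ) = 0 then 1 else x ⟨(j : ℕ) - 1, by have := j.isLt; omega⟩)) =
      fun x => E (Function.extend e x 1) := by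
    funext x
    rw [transition_vector_eq_cons]
    simp only [permTrans]
    congr 1
    funext j
    rcases Fin.eq_zero_or_eq_succ (τ j) with h | ⟨k, h⟩
    · rw [h, Fin.cons_zero, Function.extend_apply']
      · rfl
      · rintro ⟨k, rfl⟩
        simp [e, hττ] at h
    · have : j = e k := by simp [e, ← h, hττ]
      rw [h, Fin.cons_succ, this, he.extend_apply]
  have hrefl : reflTrans {0} (permTrans τ E) = permTrans τ (reflTrans {i} E) := by
    funext x
    have hτ0 : τ.symm 0 = i := by rw [hτ, Equiv.symm_swap, Equiv.swap_apply_left]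
    simp only [reflTrans_singleton, permTrans, Function.update_apply_equiv_apply, hτ0, hτi]
    rfl
  have htr := κ.transition m hm _ _ (hmarg ▸ hE.comp_extend he) (hE.permTrans τ) (fun _ _ => rfl)
  rwa [hmarg, κ.kappa_comp_extend hE he hrange, κ.permInv _ (by omega) _ hE, hrefl,
    κ.permInv _ (by omega) _ (hE.reflTrans_singleton i)] at htr

/-- In dimension two, `σ_1` and `σ_2` are dual to each other, so the reflection symmetry property
reads `2 κ₂(C) + 2 κ₂(σ_i C) = 0`. -/
theorem kappa_reflTrans_singleton_two {C : (Fin 2 → ℝ) → ℝ} (hC : IsCopula C) (i : Fin 2) :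
    κ.κ 2 (reflTrans {i} C) = -κ.κ 2 C := by
  obtain ⟨j, hji⟩ := exists_ne i
  have hj : j ∉ ({i} : Finset (Fin 2)) := by simpa using hji
  have huniv : (Finset.univ : Finset (Fin 2)) = insert j {i} :=
    (Finset.eq_univ_of_card _ (Finset.card_pair hji)).symm
  have hdual : κ.κ 2 (reflTrans {j} C) = κ.κ 2 (reflTrans {i} C) := by
    have hCi := hC.reflTrans_singleton i
    rw [← κ.duality 2 le_rfl _ hCi, huniv, reflTrans_insert_eq hj]
    exact κ.kappa_congr_cube (hC.reflTrans_singleton j)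
      ((hCi.reflTrans_singleton i).reflTrans_singleton j) <| reflTrans_congr_cube
        (fun x hx => (reflTrans_singleton_reflTrans_singleton hC i x hx).symm) _
  have hpow : ({i} : Finset (Fin 2)).powerset = {∅, {i}} := by
    ext T
    simp [Finset.subset_singleton_iff]
  have hrsp := κ.rsp 2 le_rfl C hC
  rw [← Finset.powerset_univ, huniv, Finset.sum_powerset_insert hj, hpow,
    Finset.sum_pair (Finset.empty_ne_singleton i), Finset.sum_pair (Finset.empty_ne_singleton i),
    insert_empty_eq, reflTrans_empty, ← huniv, κ.duality 2 le_rfl C hC, hdual] at hrsp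
  linarith

theorem kappa_reflTrans_singleton {C : (Fin n → ℝ) → ℝ} (hn : 2 ≤ n) (hC : IsCopula C)
    (i : Fin n) :
    κ.κ n (reflTrans {i} C) =
      κ.r ({i}ᶜ : Finset (Fin n)).card * κ.κ ({i}ᶜ : Finset (Fin n)).card (properMarg C {i}) -
        κ.κ n C := by
  obtain rfl | hn := hn.eq_or_lt
  · rw [κ.kappa_of_le_one (k := ({i}ᶜ : Finset (Fin 2)).card) (by simp [Finset.card_compl]),
      mul_zero, zero_sub, κ.kappa_reflTrans_singleton_two hC]
  obtain ⟨m, rfl⟩ : ∃ m, n = m + 1 := ⟨n - 1, by omega⟩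
  have hcard : ({i}ᶜ : Finset (Fin (m + 1))).card = m := by
    rw [Finset.card_compl, Finset.card_singleton, Fintype.card_fin, Nat.add_sub_cancel]
  rw [show κ.r ({i}ᶜ : Finset (Fin (m + 1))).card = κ.r m by rw [hcard],
    κ.transition_at (by omega) hC i]
  ring

/-- The paper's `κ_j(C_P)`, with `j = card Pᶜ`. -/
def kappaMarg (C : (Fin n → ℝ) → ℝ) (P : Finset (Fin n)) : ℝ := κ.κ Pᶜ.card (properMarg C P)

theorem kappaMarg_empty {C : (Fin n → ℝ) → ℝ} (hC : IsCopula C) : κ.kappaMarg C ∅ = κ.κ n C := by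
  have h := κ.kappa_comp_extend hC (e := id) Function.injective_id (P := ∅) (by simp)
  simp only [Function.extend_id] at h
  exact h.symm

theorem kappaMarg_properMarg {C : (Fin n → ℝ) → ℝ} (hC : IsCopula C) (P : Finset (Fin n))
    (Q : Finset (Fin Pᶜ.card)) :
    κ.kappaMarg (properMarg C P) Q = κ.kappaMarg C (P ∪ Q.image (complEmb P)) := by
  rw [kappaMarg, properMarg_properMarg, κ.kappa_comp_extend hC
    ((complEmb P).injective.comp (complEmb Q).injective) (range_complEmb_comp P Q)]
  rfl

theorem r_mul_kappa_reflTrans_of_le_one (hn : n ≤ 1) (C : (Fin n → ℝ) → ℝ) (S : Finset (Fin n)) :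
    κ.r n * κ.κ n (reflTrans S C) = reflExpansion κ.r n S (κ.kappaMarg C) := by
  rw [κ.kappa_of_le_one hn, mul_zero, eq_comm]
  refine Finset.sum_eq_zero fun P _ => ?_
  rw [kappaMarg, κ.kappa_of_le_one ((Finset.card_le_univ _).trans (by simpa using hn)), mul_zero]

theorem r_mul_kappa_reflTrans {C : (Fin n → ℝ) → ℝ} (hC : IsCopula C) (S : Finset (Fin n)) :
    κ.r n * κ.κ n (reflTrans S C) = reflExpansion κ.r n S (κ.kappaMarg C) := by
  obtain ⟨s, hs⟩ : ∃ s, S.card = s := ⟨_, rfl⟩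
  induction s generalizing n C S with
  | zero =>
    rw [Finset.card_eq_zero.mp hs, reflTrans_empty, reflExpansion_empty, κ.kappaMarg_empty hC]
  | succ s ih =>
    rcases le_or_gt n 1 with hn | hn
    · exact κ.r_mul_kappa_reflTrans_of_le_one hn C S
    obtain ⟨m, rfl⟩ : ∃ m, n = m + 1 := ⟨n - 1, by omega⟩
    obtain ⟨i, hi⟩ := Finset.card_pos.mp (hs ▸ s.succ_pos : 0 < S.card)
    set S' := S.erase i
    have hiS' : i ∉ S' := Finset.notMem_erase i S
    have hS' : S'.card = s := by rw [Finset.card_erase_of_mem hi, hs, Nat.add_sub_cancel]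
    obtain ⟨Q, -, hQ⟩ := Finset.subset_image_iff.mp <| show S' ⊆ Finset.univ.image (complEmb {i}) by
      rw [Finset.image_orderEmbOfFin_univ]
      exact fun j hj => Finset.mem_compl.mpr fun h => hiS' (Finset.mem_singleton.mp h ▸ hj)
    have hQ' : Q.card = s := by
      rw [← hS', ← hQ, Finset.card_image_of_injective _ (complEmb {i}).injective]
    have hcard : ({i}ᶜ : Finset (Fin (m + 1))).card = m := by
      rw [Finset.card_compl, Finset.card_singleton, Fintype.card_fin, Nat.add_sub_cancel]
    have hmarg : reflExpansion κ.r ({i}ᶜ : Finset (Fin (m + 1))).card Q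
        (κ.kappaMarg (properMarg C {i})) =
        reflExpansion κ.r m S' (fun P => κ.kappaMarg C (insert i P)) := by
      have hg : κ.kappaMarg (properMarg C {i}) =
          fun Q => κ.kappaMarg C (insert i (Q.image (complEmb {i}))) :=
        funext fun Q => by rw [κ.kappaMarg_properMarg hC, Finset.insert_eq]
      rw [hg, ← hQ, reflExpansion_image _ _ (complEmb {i}).injective]
      exact congrArg (reflExpansion κ.r · Q _) hcard
    rw [← Finset.insert_erase hi, reflExpansion_insert _ _ hiS', reflTrans_insert_eq hiS',
      κ.kappa_reflTrans_singleton (by omega) (hC.reflTrans S'), ← hQ, properMarg_reflTrans_image,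
      mul_sub, ih (hC.properMarg {i}) Q hQ', hQ, hmarg, ih hC S' hS']

end ConcordanceMeasure

theorem stmt14_general (κ : ConcordanceMeasure) {n : ℕ}
    (C : (Fin n → ℝ) → ℝ) (hC : IsCopula C) (S : Finset (Fin n)) :
    κ.r n * κ.κ n (reflTrans S C) =
      ∑ j ∈ Finset.Icc (n - S.card) n, (-1 : ℝ) ^ (n - S.card + j) *
        (∏ k ∈ Finset.Icc j n, κ.r k) *
        ∑ P ∈ S.powersetCard (n - j), κ.κ (Pᶜ.card) (properMarg C P) := by
  rw [κ.r_mul_kappa_reflTrans hC S,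
    reflExpansion_eq_sum_Icc _ _ ((Finset.card_le_univ S).trans_eq (Fintype.card_fin n))]
  rfl

/-- Reflection-reduction formula (case `T = ∅` of Theorem 4.4 of Taylor): the measure of
concordance of `σ_S*(C)` in terms of the measures of concordance of the marginals of `C`.
Here `κ_j(C_P)` is `κ_j` of the proper `j`-copula of `C_P` (note `card Pᶜ = j`). -/
theorem stmt14 (κ : ConcordanceMeasure) {n : ℕ} (hn : 2 ≤ n)
    (C : (Fin n → ℝ) → ℝ) (hC : IsCopula C) (S : Finset (Fin n)) :
    κ.r n * κ.κ n (reflTrans S C) =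
      ∑ j ∈ Finset.Icc (n - S.card) n, (-1 : ℝ) ^ (n - S.card + j) *
        (∏ k ∈ Finset.Icc j n, κ.r k) *
        ∑ P ∈ S.powersetCard (n - j), κ.κ (Pᶜ.card) (properMarg C P) :=
  stmt14_general κ C hC S

end
end
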